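/- If t is a β-normal λ-term such that Γ ⊢_F t : A, then there exists a λ-term t' that is η-long of type A in the context Γ and such that t' η-reduces to t. -/

import Mathlib

set_option maxHeartbeats 1000000

/-- Untyped λ-terms in de Bruijn representation. -/
inductive Trm : Type
  | var : ℕ → Trm
  | app : Trm → Trm → Trm
  | lam : Trm → Trm
  deriving DecidableEq

namespace Trm

/-- The set of free variables of a term (as de Bruijn indices). -/
def fv : Trm → Set ℕ
  | var n => {n}
  | app u v => fv u ∪ fv v
  | lam u => {n | n + 1 ∈ fv u}

/-- A term is closed if it has no free variables. -/
def Closed (t : Trm) : Prop := fv t = ∅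

/-- λI-terms: abstraction is allowed only on variables occurring free in the body. -/
inductive IsLI : Trm → Prop
  | var (n : ℕ) : IsLI (var n)
  | app {u v : Trm} : IsLI u → IsLI v → IsLI (app u v)
  | lam {u : Trm} : IsLI u → 0 ∈ fv u → IsLI (lam u)

/-- Lifting of free variables ≥ d. -/
def lift (d : ℕ) : Trm → Trm
  | var n => if n < d then var n else var (n + 1)
  | app u v => app (lift d u) (lift d v)
  | lam u => lam (lift (d + 1) u)

def liftTimes (k : ℕ) (t : Trm) : Trm := (lift 0)^[k] t

/-- Capture-avoiding substitution of the k-th free variable. -/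
def subst : Trm → ℕ → Trm → Trm
  | var n, k, v => if n < k then var n else if n = k then liftTimes k v else var (n - 1)
  | app a b, k, v => app (subst a k v) (subst b k v)
  | lam a, k, v => lam (subst a (k + 1) v)

end Trm

/-- One step of β-reduction. -/
inductive Beta : Trm → Trm → Prop
  | beta {u v : Trm} : Beta (.app (.lam u) v) (u.subst 0 v)
  | appL {u u' v : Trm} : Beta u u' → Beta (.app u v) (.app u' v)
  | appR {u v v' : Trm} : Beta v v' → Beta (.app u v) (.app u v')
  | lam {u u' : Trm} : Beta u u' → Beta (.lam u) (.lam u')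

/-- One step of η-reduction: λx (u)x → u when x ∉ Fv(u). -/
inductive Eta : Trm → Trm → Prop
  | eta (u : Trm) : Eta (.lam (.app (u.lift 0) (.var 0))) u
  | appL {u u' v : Trm} : Eta u u' → Eta (.app u v) (.app u' v)
  | appR {u v v' : Trm} : Eta v v' → Eta (.app u v) (.app u v')
  | lam {u u' : Trm} : Eta u u' → Eta (.lam u) (.lam u')

/-- β-reduction (reflexive-transitive closure). -/
def BetaStar : Trm → Trm → Prop := Relation.ReflTransGen Beta

/-- βη-reduction (reflexive-transitive closure of the union of β and η). -/
def BetaEtaStar : Trm → Trm → Prop := Relation.ReflTransGen (fun a b => Beta a b ∨ Eta a b)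

/-- η-reduction (reflexive-transitive closure). -/
def EtaStar : Trm → Trm → Prop := Relation.ReflTransGen Eta

/-- A term is β-normal iff it contains no β-redex. -/
def BetaNormal (t : Trm) : Prop := ∀ u, ¬ Beta t u

/-- A term is βη-normal iff it contains neither a β-redex nor an η-redex. -/
def BetaEtaNormal (t : Trm) : Prop := ∀ u, ¬ Beta t u ∧ ¬ Eta t u

/-- A term is strongly normalizable iff every β-reduction sequence from it is finite. -/
def StronglyNormalizable (t : Trm) : Prop :=
  ¬ ∃ f : ℕ → Trm, f 0 = t ∧ ∀ n, Beta (f n) (f (n + 1))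

/-- Types of system F in de Bruijn representation. -/
inductive Ty : Type
  | var : ℕ → Ty
  | arr : Ty → Ty → Ty
  | all : Ty → Ty
  deriving DecidableEq

namespace Ty

/-- Free type variables. -/
def tfv : Ty → Set ℕ
  | var n => {n}
  | arr A B => tfv A ∪ tfv B
  | all A => {n | n + 1 ∈ tfv A}

/-- Lifting of free type variables ≥ d. -/
def tlift (d : ℕ) : Ty → Ty
  | var n => if n < d then var n else var (n + 1)
  | arr A B => arr (tlift d A) (tlift d B)
  | all A => all (tlift (d + 1) A)

def tliftTimes (k : ℕ) (A : Ty) : Ty := (tlift 0)^[k] A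

/-- Substitution of the k-th free type variable. -/
def tsubst : Ty → ℕ → Ty → Ty
  | var n, k, G => if n < k then var n else if n = k then tliftTimes k G else var (n - 1)
  | arr A B, k, G => arr (tsubst A k G) (tsubst B k G)
  | all A, k, G => all (tsubst A (k + 1) G)

/-- Proper types: in every subtype ∀X E, the variable X occurs free in E. -/
def Proper : Ty → Prop
  | var _ => True
  | arr A B => Proper A ∧ Proper B
  | all A => Proper A ∧ 0 ∈ tfv A

/-- Closed types. -/
def ClosedTy (A : Ty) : Prop := tfv A = ∅

end Ty

/-- Typing derivations of system F (restricted to proper types), as explicit trees. -/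
inductive Deriv : List Ty → Trm → Ty → Type
  | ax {Γ : List Ty} {n : ℕ} {A : Ty} :
      Γ[n]? = some A → (∀ B ∈ Γ, B.Proper) → Deriv Γ (.var n) A
  | arrI {Γ : List Ty} {A B : Ty} {t : Trm} :
      A.Proper → Deriv (A :: Γ) t B → Deriv Γ (.lam t) (.arr A B)
  | arrE {Γ : List Ty} {A B : Ty} {u v : Trm} :
      Deriv Γ u (.arr A B) → Deriv Γ v A → Deriv Γ (.app u v) B
  | allI {Γ : List Ty} {A : Ty} {t : Trm} :
      0 ∈ Ty.tfv A → Deriv (Γ.map (Ty.tlift 0)) t A → Deriv Γ t (.all A)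
  | allE {Γ : List Ty} {A : Ty} {t : Trm} (G : Ty) :
      G.Proper → 0 ∈ Ty.tfv A → Deriv Γ t (.all A) → Deriv Γ t (A.tsubst 0 G)

/-- A term of the form (x)t₁...tₙ whose head is a variable. -/
def isHeadVar : Trm → Prop
  | .var _ => True
  | .app u _ => isHeadVar u
  | .lam _ => False

/-- A derivation uses the rule (∀e)₂ iff some (∀e) node in it has a subject term
of the form (x)t₁...tₙ with head a variable. -/
inductive UsesAllE2 : ∀ {Γ : List Ty} {t : Trm} {A : Ty}, Deriv Γ t A → Prop
  | arrI {Γ : List Ty} {A B : Ty} {t : Trm} (h : Ty.Proper A) (d : Deriv (A :: Γ) t B) :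
      UsesAllE2 d → UsesAllE2 (Deriv.arrI h d)
  | arrEL {Γ : List Ty} {A B : Ty} {u v : Trm} (d : Deriv Γ u (.arr A B)) (e : Deriv Γ v A) :
      UsesAllE2 d → UsesAllE2 (Deriv.arrE d e)
  | arrER {Γ : List Ty} {A B : Ty} {u v : Trm} (d : Deriv Γ u (.arr A B)) (e : Deriv Γ v A) :
      UsesAllE2 e → UsesAllE2 (Deriv.arrE d e)
  | allI {Γ : List Ty} {A : Ty} {t : Trm} (h : 0 ∈ Ty.tfv A) (d : Deriv (List.map (Ty.tlift 0) Γ) t A) :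
      UsesAllE2 d → UsesAllE2 (Deriv.allI h d)
  | allE_self {Γ : List Ty} {A : Ty} {t : Trm} (G : Ty) (hG : G.Proper) (hA : 0 ∈ Ty.tfv A)
      (d : Deriv Γ t (.all A)) : isHeadVar t → UsesAllE2 (Deriv.allE G hG hA d)
  | allE_rec {Γ : List Ty} {A : Ty} {t : Trm} (G : Ty) (hG : G.Proper) (hA : 0 ∈ Ty.tfv A)
      (d : Deriv Γ t (.all A)) : UsesAllE2 d → UsesAllE2 (Deriv.allE G hG hA d)

mutual
  /-- A derivation is η-long: all essential subterms of the (β-normal) subject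
  are typed by type variables in the derivation. -/
  inductive EP : ∀ {Γ : List Ty} {t : Trm} {A : Ty}, Deriv Γ t A → Prop
    | arrI {Γ : List Ty} {A B : Ty} {t : Trm} (h : Ty.Proper A) (d : Deriv (A :: Γ) t B) :
        EP d → EP (Deriv.arrI h d)
    | allI {Γ : List Ty} {A : Ty} {t : Trm} (h : 0 ∈ Ty.tfv A) (d : Deriv (List.map (Ty.tlift 0) Γ) t A) :
        EP d → EP (Deriv.allI h d)
    | head {Γ : List Ty} {t : Trm} {X : ℕ} (d : Deriv Γ t (Ty.var X)) : HP d → EP d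
  /-- Auxiliary predicate for the head part (x)t₁...tₘ of an η-long derivation. -/
  inductive HP : ∀ {Γ : List Ty} {t : Trm} {A : Ty}, Deriv Γ t A → Prop
    | ax {Γ : List Ty} {n : ℕ} {A : Ty} (h₁ : Γ[n]? = some A) (h₂ : ∀ B ∈ Γ, B.Proper) :
        HP (Deriv.ax h₁ h₂)
    | arrE {Γ : List Ty} {A B : Ty} {u v : Trm} (d : Deriv Γ u (.arr A B)) (e : Deriv Γ v A) :
        HP d → EP e → HP (Deriv.arrE d e)
    | allE {Γ : List Ty} {A : Ty} {t : Trm} (G : Ty) (hG : G.Proper) (hA : 0 ∈ Ty.tfv A)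
        (d : Deriv Γ t (.all A)) : HP d → HP (Deriv.allE G hG hA d)
end

/-- t is an η-long term of type A in the context Γ. -/
def EtaLong (Γ : List Ty) (t : Trm) (A : Ty) : Prop := ∃ d : Deriv Γ t A, EP d

/-!
Normalise the typing derivation first: a (∀e) applied to the conclusion of a (∀i) is removed by
substituting the instantiating type into the premise of the (∀i). In a derivation without such
cuts an abstraction is typed by (→i) or (∀i), so every other subject is a head term
(x)t₁…tₘ, and its eliminations already form the spine of an η-long derivation once the
arguments tᵢ are replaced by their η-long forms; this is one induction on the derivation.
What remains is a head term typed by a non-variable: at A → B it is expanded to λy (t)ŷ with ŷ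
the η-long form of the fresh variable y, at ∀X A it is instantiated at a fresh X and generalised
again, by induction on the type.
-/

namespace Ty

theorem tlift_var_of_lt {n d : ℕ} (h : n < d) : tlift d (var n) = var n := by
  simp [tlift, h]

theorem tlift_var_of_le {n d : ℕ} (h : d ≤ n) : tlift d (var n) = var (n + 1) := by
  simp [tlift, Nat.not_lt.2 h]

theorem tsubst_var_of_lt {n k : ℕ} (G : Ty) (h : n < k) : tsubst (var n) k G = var n := by
  simp [tsubst, h]

theorem tsubst_var_self (k : ℕ) (G : Ty) : tsubst (var k) k G = tliftTimes k G := by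
  simp [tsubst]

theorem tsubst_var_of_gt {n k : ℕ} (G : Ty) (h : k < n) : tsubst (var n) k G = var (n - 1) := by
  rw [tsubst, if_neg (by omega), if_neg (by omega)]

theorem tlift_tlift_of_le (A : Ty) {d e : ℕ} (h : d ≤ e) :
    tlift d (tlift e A) = tlift (e + 1) (tlift d A) := by
  induction A generalizing d e with
  | var n =>
    rcases Nat.lt_or_ge n d with h1 | h1
    · rw [tlift_var_of_lt (by omega), tlift_var_of_lt h1, tlift_var_of_lt (by omega)]
    rcases Nat.lt_or_ge n e with h2 | h2
    · rw [tlift_var_of_lt h2, tlift_var_of_le h1, tlift_var_of_lt (by omega)]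
    · rw [tlift_var_of_le h2, tlift_var_of_le (by omega), tlift_var_of_le h1,
        tlift_var_of_le (by omega)]
  | arr A B ihA ihB => simp only [tlift, ihA h, ihB h]
  | all A ih => simp only [tlift, ih (Nat.succ_le_succ h)]

theorem tliftTimes_succ (k : ℕ) (A : Ty) : tliftTimes (k + 1) A = tlift 0 (tliftTimes k A) :=
  Function.iterate_succ_apply' _ _ _

theorem tliftTimes_var (k n : ℕ) : tliftTimes k (var n) = var (n + k) := by
  induction k with
  | zero => rfl
  | succ k ih => rw [tliftTimes_succ, ih, tlift_var_of_le (by omega)]; rfl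

theorem tlift_tliftTimes (d j : ℕ) (A : Ty) :
    tlift d (tliftTimes (d + j) A) = tliftTimes (d + j + 1) A := by
  induction d generalizing j with
  | zero => simp [tliftTimes_succ]
  | succ d ih =>
    rw [Nat.add_right_comm, tliftTimes_succ, ← tlift_tlift_of_le _ (Nat.zero_le d), ih,
      ← tliftTimes_succ]

theorem tlift_add_tliftTimes (k d : ℕ) (A : Ty) :
    tlift (k + d) (tliftTimes k A) = tliftTimes k (tlift d A) := by
  induction k with
  | zero => simp [tliftTimes]
  | succ k ih =>
    rw [tliftTimes_succ, Nat.add_right_comm, ← tlift_tlift_of_le _ (Nat.zero_le _), ih,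
      ← tliftTimes_succ]

theorem tsubst_tlift_self (A : Ty) (d : ℕ) (G : Ty) : tsubst (tlift d A) d G = A := by
  induction A generalizing d with
  | var n =>
    rcases Nat.lt_or_ge n d with h | h
    · rw [tlift_var_of_lt h, tsubst_var_of_lt G h]
    · rw [tlift_var_of_le h, tsubst_var_of_gt G (by omega), Nat.add_sub_cancel]
  | arr A B ihA ihB => simp only [tlift, tsubst, ihA, ihB]
  | all A ih => simp only [tlift, tsubst, ih]

theorem tsubst_tliftTimes_succ (A : Ty) {m j : ℕ} (H : Ty) (h : j ≤ m) :
    tsubst (tliftTimes (m + 1) A) j H = tliftTimes m A := by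
  obtain ⟨r, rfl⟩ := Nat.exists_eq_add_of_le h
  rw [← tlift_tliftTimes j r A, tsubst_tlift_self]

theorem tsubst_tlift_succ_var_zero (A : Ty) (d : ℕ) : tsubst (tlift (d + 1) A) d (var 0) = A := by
  induction A generalizing d with
  | var n =>
    rcases lt_trichotomy n d with h | rfl | h
    · rw [tlift_var_of_lt (by omega), tsubst_var_of_lt _ h]
    · rw [tlift_var_of_lt (by omega), tsubst_var_self, tliftTimes_var, Nat.zero_add]
    · rw [tlift_var_of_le (by omega), tsubst_var_of_gt _ (by omega), Nat.add_sub_cancel]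
  | arr A B ihA ihB => simp only [tlift, tsubst, ihA, ihB]
  | all A ih => simp only [tlift, tsubst, ih]

theorem tsubst_succ_tlift (A : Ty) {d k : ℕ} (G : Ty) (h : d ≤ k) :
    tsubst (tlift d A) (k + 1) G = tlift d (tsubst A k G) := by
  induction A generalizing d k with
  | var n =>
    rcases lt_trichotomy n k with h1 | rfl | h1
    · rcases Nat.lt_or_ge n d with h2 | h2
      · rw [tlift_var_of_lt h2, tsubst_var_of_lt _ (by omega), tsubst_var_of_lt _ h1,
          tlift_var_of_lt h2]
      · rw [tlift_var_of_le h2, tsubst_var_of_lt _ (by omega), tsubst_var_of_lt _ h1,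
          tlift_var_of_le h2]
    · obtain ⟨j, rfl⟩ := Nat.exists_eq_add_of_le h
      rw [tlift_var_of_le h, tsubst_var_self, tsubst_var_self, tlift_tliftTimes]
    · rw [tlift_var_of_le (by omega), tsubst_var_of_gt _ (by omega), tsubst_var_of_gt _ h1,
        tlift_var_of_le (by omega), Nat.sub_add_cancel (by omega)]
      rfl
  | arr A B ihA ihB => simp only [tlift, tsubst, ihA h, ihB h]
  | all A ih => simp only [tlift, tsubst, ih (Nat.succ_le_succ h)]

theorem tsubst_add_tliftTimes (A : Ty) (j k : ℕ) (G : Ty) :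
    tsubst (tliftTimes j A) (j + k) G = tliftTimes j (tsubst A k G) := by
  induction j generalizing k with
  | zero => simp [tliftTimes]
  | succ j ih =>
    rw [tliftTimes_succ, Nat.add_right_comm, tsubst_succ_tlift _ _ (Nat.zero_le _), ih,
      ← tliftTimes_succ]

theorem tlift_tsubst (A : Ty) (k d : ℕ) (G : Ty) :
    tlift (k + d) (tsubst A k G) = tsubst (tlift (k + d + 1) A) k (tlift d G) := by
  induction A generalizing k with
  | var n =>
    rcases lt_trichotomy n k with h1 | rfl | h1
    · rw [tsubst_var_of_lt _ h1, tlift_var_of_lt (by omega), tlift_var_of_lt (by omega),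
        tsubst_var_of_lt _ h1]
    · rw [tsubst_var_self, tlift_var_of_lt (by omega), tsubst_var_self, tlift_add_tliftTimes]
    rcases Nat.lt_or_ge n (k + d + 1) with h2 | h2
    · rw [tsubst_var_of_gt _ h1, tlift_var_of_lt (by omega), tlift_var_of_lt h2,
        tsubst_var_of_gt _ h1]
    · rw [tsubst_var_of_gt _ h1, tlift_var_of_le (by omega), tlift_var_of_le h2,
        tsubst_var_of_gt _ (by omega), Nat.sub_add_cancel (by omega)]
      rfl
  | arr A B ihA ihB => simp only [tlift, tsubst, ihA, ihB]
  | all A ih =>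
    simp only [tlift, tsubst]
    rw [Nat.add_right_comm k d 1, ih (k + 1)]

theorem tsubst_tsubst (A : Ty) (j k : ℕ) (G G' : Ty) :
    tsubst (tsubst A (j + k + 1) G) j (tsubst G' k G) = tsubst (tsubst A j G') (j + k) G := by
  induction A generalizing j with
  | var n =>
    rcases lt_trichotomy n j with h1 | rfl | h1
    · rw [tsubst_var_of_lt _ (by omega), tsubst_var_of_lt _ h1, tsubst_var_of_lt _ h1,
        tsubst_var_of_lt _ (by omega)]
    · rw [tsubst_var_of_lt _ (by omega), tsubst_var_self, tsubst_var_self, tsubst_add_tliftTimes]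
    rcases lt_trichotomy n (j + k + 1) with h2 | rfl | h2
    · rw [tsubst_var_of_lt _ h2, tsubst_var_of_gt _ h1, tsubst_var_of_gt _ h1,
        tsubst_var_of_lt _ (by omega)]
    · rw [tsubst_var_self, tsubst_tliftTimes_succ _ _ (by omega), tsubst_var_of_gt _ h1,
        Nat.add_sub_cancel, tsubst_var_self]
    · rw [tsubst_var_of_gt _ h2, tsubst_var_of_gt _ (by omega), tsubst_var_of_gt _ (by omega),
        tsubst_var_of_gt _ (by omega)]
  | arr A B ihA ihB => simp only [tsubst, ihA, ihB]
  | all A ih =>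
    simp only [tsubst]
    rw [show j + k + 1 + 1 = j + 1 + k + 1 by omega, ih, Nat.add_right_comm j 1 k]

theorem mem_tfv_tlift (A : Ty) (d m : ℕ) :
    m ∈ tfv (tlift d A) ↔ (m < d ∧ m ∈ tfv A) ∨ (d < m ∧ m - 1 ∈ tfv A) := by
  induction A generalizing d m with
  | var n =>
    rcases Nat.lt_or_ge n d with h | h
    · rw [tlift_var_of_lt h]; simp only [tfv, Set.mem_singleton_iff]; omega
    · rw [tlift_var_of_le h]; simp only [tfv, Set.mem_singleton_iff]; omega
  | arr A B ihA ihB => simp only [tlift, tfv, Set.mem_union, ihA, ihB]; tauto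
  | all A ih =>
    simp only [tlift, tfv, Set.mem_ofPred_eq, ih]
    rcases m with _ | m <;> simp

theorem notMem_tfv_tliftTimes (G : Ty) {k m : ℕ} (h : m < k) : m ∉ tfv (tliftTimes k G) := by
  induction k generalizing m with
  | zero => omega
  | succ k ih =>
    rw [tliftTimes_succ, mem_tfv_tlift]
    rintro (⟨h1, -⟩ | ⟨h1, h2⟩)
    · omega
    · exact ih (by omega) h2

theorem mem_tfv_tsubst_of_lt (A : Ty) {k m : ℕ} (G : Ty) (h : m < k) :
    m ∈ tfv (tsubst A k G) ↔ m ∈ tfv A := by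
  induction A generalizing k m with
  | var n =>
    rcases lt_trichotomy n k with h1 | rfl | h1
    · rw [tsubst_var_of_lt _ h1]
    · rw [tsubst_var_self]
      simp only [tfv, Set.mem_singleton_iff]
      exact ⟨fun hm => absurd hm (notMem_tfv_tliftTimes G h), by omega⟩
    · rw [tsubst_var_of_gt _ h1]; simp only [tfv, Set.mem_singleton_iff]; omega
  | arr A B ihA ihB => simp only [tsubst, tfv, Set.mem_union, ihA h, ihB h]
  | all A ih => exact ih (Nat.succ_lt_succ h)

theorem proper_tlift_iff (A : Ty) (d : ℕ) : Proper (tlift d A) ↔ Proper A := by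
  induction A generalizing d with
  | var n =>
    rcases Nat.lt_or_ge n d with h | h
    · rw [tlift_var_of_lt h]
    · rw [tlift_var_of_le h]; exact Iff.rfl
  | arr A B ihA ihB => simp only [tlift, Proper, ihA, ihB]
  | all A ih => simp [tlift, Proper, ih, mem_tfv_tlift]

theorem Proper.tliftTimes {G : Ty} (hG : Proper G) (k : ℕ) : Proper (tliftTimes k G) := by
  induction k with
  | zero => exact hG
  | succ k ih => rwa [tliftTimes_succ, proper_tlift_iff]

theorem Proper.tsubst {A G : Ty} (hA : Proper A) (hG : Proper G) (k : ℕ) :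
    Proper (tsubst A k G) := by
  induction A generalizing k with
  | var n =>
    rcases lt_trichotomy n k with h | rfl | h
    · rw [tsubst_var_of_lt _ h]; trivial
    · rw [tsubst_var_self]; exact hG.tliftTimes n
    · rw [tsubst_var_of_gt _ h]; trivial
  | arr A B ihA ihB => exact ⟨ihA hA.1 k, ihB hA.2 k⟩
  | all A ih => exact ⟨ih hA.1 _, (mem_tfv_tsubst_of_lt A G (Nat.succ_pos k)).2 hA.2⟩

theorem map_tsubst_map_tlift (Γ : List Ty) (G : Ty) :
    (Γ.map (tlift 0)).map (·.tsubst 0 G) = Γ := by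
  simp [Function.comp_def, tsubst_tlift_self]

theorem exists_tlift_var_eq_var (m X : ℕ) : ∃ Y, tlift m (.var X) = .var Y := by
  unfold tlift; split <;> exact ⟨_, rfl⟩

theorem map_tlift_succ_map_tlift_zero (Γ : List Ty) (m : ℕ) :
    (Γ.map (Ty.tlift 0)).map (Ty.tlift (m + 1)) = (Γ.map (Ty.tlift m)).map (Ty.tlift 0) := by
  simp only [List.map_map]
  exact List.map_congr_left fun B _ => (tlift_tlift_of_le B (Nat.zero_le m)).symm

theorem map_tsubst_succ_map_tlift_zero (Γ : List Ty) (k : ℕ) (G : Ty) :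
    (Γ.map (Ty.tlift 0)).map (·.tsubst (k + 1) G) = (Γ.map (·.tsubst k G)).map (Ty.tlift 0) := by
  simp only [List.map_map]
  exact List.map_congr_left fun B _ => tsubst_succ_tlift B G (Nat.zero_le k)

end Ty

theorem Trm.lift_var (d n : ℕ) : Trm.lift d (.var n) = .var (if n < d then n else n + 1) := by
  unfold Trm.lift; split <;> rfl

theorem List.getElem?_append_cons_shift {α : Type*} (l₁ l₂ : List α) (c : α) (n : ℕ) :
    (l₁ ++ c :: l₂)[if n < l₁.length then n else n + 1]? = (l₁ ++ l₂)[n]? := by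
  split_ifs with h
  · rw [List.getElem?_append_left h, List.getElem?_append_left h]
  · rw [List.getElem?_append_right (by omega), List.getElem?_append_right (by omega),
      Nat.sub_add_comm (by omega), List.getElem?_cons_succ]

theorem BetaNormal.of_lam {u : Trm} (h : BetaNormal (.lam u)) : BetaNormal u :=
  fun _ hb => h _ (.lam hb)

theorem BetaNormal.of_app_left {u v : Trm} (h : BetaNormal (.app u v)) : BetaNormal u :=
  fun _ hb => h _ (.appL hb)

theorem BetaNormal.of_app_right {u v : Trm} (h : BetaNormal (.app u v)) : BetaNormal v :=
  fun _ hb => h _ (.appR hb)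

theorem BetaNormal.isHeadVar {t : Trm} (h : BetaNormal t) (ht : ∀ u, t ≠ .lam u) : isHeadVar t := by
  induction t with
  | var => trivial
  | lam u => exact ht u rfl
  | app a b iha =>
    exact iha h.of_app_left fun w hw => h (w.subst 0 b) (hw ▸ Beta.beta)

theorem EtaStar.lam {u u' : Trm} (h : EtaStar u u') : EtaStar (.lam u) (.lam u') :=
  Relation.ReflTransGen.lift Trm.lam (fun _ _ => Eta.lam) _ _ h

theorem EtaStar.app_left {u u' v : Trm} (h : EtaStar u u') : EtaStar (.app u v) (.app u' v) :=
  Relation.ReflTransGen.lift (Trm.app · v) (fun _ _ => Eta.appL) _ _ h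

theorem EtaStar.app_right {u v v' : Trm} (h : EtaStar v v') : EtaStar (.app u v) (.app u v') :=
  Relation.ReflTransGen.lift (Trm.app u) (fun _ _ => Eta.appR) _ _ h

namespace Deriv

def cast {Γ Γ' : List Ty} {t t' : Trm} {A A' : Ty} (hΓ : Γ = Γ') (ht : t = t') (hA : A = A')
    (d : Deriv Γ t A) : Deriv Γ' t' A' :=
  hΓ ▸ ht ▸ hA ▸ d

def IsAllI : ∀ {Γ : List Ty} {t : Trm} {A : Ty}, Deriv Γ t A → Prop
  | _, _, _, .allI _ _ => True
  | _, _, _, _ => False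

def AllCutFree : ∀ {Γ : List Ty} {t : Trm} {A : Ty}, Deriv Γ t A → Prop
  | _, _, _, .ax _ _ => True
  | _, _, _, .arrI _ d => d.AllCutFree
  | _, _, _, .arrE d e => d.AllCutFree ∧ e.AllCutFree
  | _, _, _, .allI _ d => d.AllCutFree
  | _, _, _, .allE _ _ _ d => d.AllCutFree ∧ ¬ d.IsAllI

section cast

variable {Γ Γ' : List Ty} {t t' : Trm} {A A' : Ty}

theorem hp_cast (hΓ : Γ = Γ') (ht : t = t') (hA : A = A') (d : Deriv Γ t A) :
    HP (d.cast hΓ ht hA) ↔ HP d := by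
  subst hΓ ht hA; rfl

theorem ep_cast (hΓ : Γ = Γ') (ht : t = t') (hA : A = A') (d : Deriv Γ t A) :
    EP (d.cast hΓ ht hA) ↔ EP d := by
  subst hΓ ht hA; rfl

theorem isAllI_cast (hΓ : Γ = Γ') (ht : t = t') (hA : A = A') (d : Deriv Γ t A) :
    (d.cast hΓ ht hA).IsAllI ↔ d.IsAllI := by
  subst hΓ ht hA; rfl

theorem allCutFree_cast (hΓ : Γ = Γ') (ht : t = t') (hA : A = A') (d : Deriv Γ t A) :
    (d.cast hΓ ht hA).AllCutFree ↔ d.AllCutFree := by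
  subst hΓ ht hA; rfl

end cast

variable {Γ : List Ty} {t : Trm} {A : Ty}

theorem ctx_proper (d : Deriv Γ t A) : ∀ B ∈ Γ, B.Proper := by
  induction d with
  | ax _ h => exact h
  | arrI _ _ ih => exact fun B hB => ih B (List.mem_cons_of_mem _ hB)
  | arrE _ _ ih => exact ih
  | allI _ _ ih =>
    exact fun B hB => (Ty.proper_tlift_iff B 0).1 (ih _ (List.mem_map_of_mem hB))
  | allE _ _ _ _ ih => exact ih

theorem ty_proper (d : Deriv Γ t A) : A.Proper := by
  induction d with
  | ax h₁ h₂ => exact h₂ _ (List.mem_of_getElem? h₁)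
  | arrI hA _ ih => exact ⟨hA, ih⟩
  | arrE _ _ ih => exact ih.2
  | allI h _ ih => exact ⟨ih, h⟩
  | allE _ hG _ _ ih => exact ih.1.tsubst hG 0

theorem IsAllI.exists_eq_all {d : Deriv Γ t A} (h : d.IsAllI) : ∃ A', A = .all A' := by
  cases d <;> first | exact h.elim | exact ⟨_, rfl⟩

end Deriv

def HP.Inv : ∀ {Γ : List Ty} {t : Trm} {A : Ty}, Deriv Γ t A → Prop
  | _, _, _, .ax _ _ => True
  | _, _, _, .arrI _ _ => False
  | _, _, _, .arrE d e => HP d ∧ EP e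
  | _, _, _, .allI _ _ => False
  | _, _, _, .allE _ _ _ d => HP d

def EP.Inv : ∀ {Γ : List Ty} {t : Trm} {A : Ty}, Deriv Γ t A → Prop
  | _, _, _, .arrI _ d => EP d
  | _, _, _, .allI _ d => EP d
  | _, _, A, d => HP d ∧ ∃ X, A = .var X

section inversion

variable {Γ : List Ty} {t : Trm} {A : Ty} {d : Deriv Γ t A}

theorem HP.inv (h : HP d) : HP.Inv d := by
  cases h with
  | ax => trivial
  | arrE _ _ hd he => exact ⟨hd, he⟩
  | allE _ _ _ _ hd => exact hd

theorem EP.of_hp (h : HP d) (hA : ∃ X, A = .var X) : EP d := by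
  obtain ⟨X, rfl⟩ := hA
  exact .head d h

theorem EP.inv_of_hp (h : HP d) (hA : ∃ X, A = .var X) : EP.Inv d := by
  cases h with
  | ax => exact ⟨.ax _ _, hA⟩
  | arrE _ _ hd he => exact ⟨.arrE _ _ hd he, hA⟩
  | allE _ _ _ _ hd => exact ⟨.allE _ _ _ _ hd, hA⟩

theorem EP.inv (h : EP d) : EP.Inv d := by
  cases h with
  | arrI _ _ h => exact h
  | allI _ _ h => exact h
  | head d h => exact EP.inv_of_hp h ⟨_, rfl⟩

end inversion

namespace Deriv

def tlift (m : ℕ) : ∀ {Γ : List Ty} {t : Trm} {A : Ty},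
    Deriv Γ t A → Deriv (Γ.map (Ty.tlift m)) t (A.tlift m)
  | _, _, _, .ax h₁ h₂ =>
    .ax (by rw [List.getElem?_map, h₁]; rfl) (by
      simp only [List.mem_map, forall_exists_index, and_imp, forall_apply_eq_imp_iff₂]
      exact fun B hB => (Ty.proper_tlift_iff B m).2 (h₂ B hB))
  | _, _, _, .arrI hA d => .arrI ((Ty.proper_tlift_iff _ m).2 hA) (d.tlift m)
  | _, _, _, .arrE d e => .arrE (d.tlift m) (e.tlift m)
  | Γ, _, _, .allI h d =>
    .allI ((Ty.mem_tfv_tlift _ (m + 1) 0).2 (.inl ⟨m.succ_pos, h⟩))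
      ((d.tlift (m + 1)).cast (Ty.map_tlift_succ_map_tlift_zero Γ m) rfl rfl)
  | _, _, _, .allE (A := A) G hG hA d =>
    (Deriv.allE (G.tlift m) ((Ty.proper_tlift_iff G m).2 hG)
      ((Ty.mem_tfv_tlift _ (m + 1) 0).2 (.inl ⟨m.succ_pos, hA⟩)) (d.tlift m)).cast rfl rfl
      (by simpa using (Ty.tlift_tsubst A 0 m G).symm)

def weaken (C : Ty) (hC : C.Proper) : ∀ {Γ : List Ty} {t : Trm} {A : Ty} (Γ₁ Γ₂ : List Ty),
    Γ = Γ₁ ++ Γ₂ → Deriv Γ t A → Deriv (Γ₁ ++ C :: Γ₂) (t.lift Γ₁.length) A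
  | _, _, _, Γ₁, Γ₂, hΓ, .ax h₁ h₂ =>
    (Deriv.ax (by rwa [List.getElem?_append_cons_shift, ← hΓ]) (by
      subst hΓ
      simp only [List.mem_append, List.mem_cons] at h₂ ⊢
      rintro B (hB | rfl | hB)
      exacts [h₂ B (.inl hB), hC, h₂ B (.inr hB)])).cast rfl (Trm.lift_var _ _).symm rfl
  | _, _, _, Γ₁, Γ₂, hΓ, .arrI (A := A) hA d =>
    .arrI hA (d.weaken C hC (A :: Γ₁) Γ₂ (by rw [hΓ]; rfl))
  | _, _, _, Γ₁, Γ₂, hΓ, .arrE d e => .arrE (d.weaken C hC Γ₁ Γ₂ hΓ) (e.weaken C hC Γ₁ Γ₂ hΓ)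
  | _, _, _, Γ₁, Γ₂, hΓ, .allI h d =>
    .allI h ((d.weaken (C.tlift 0) ((Ty.proper_tlift_iff C 0).2 hC) (Γ₁.map (Ty.tlift 0))
      (Γ₂.map (Ty.tlift 0)) (by rw [hΓ, List.map_append])).cast (by simp)
      (by rw [List.length_map]) rfl)
  | _, _, _, Γ₁, Γ₂, hΓ, .allE G hG hA d => .allE G hG hA (d.weaken C hC Γ₁ Γ₂ hΓ)

def tsubst (G : Ty) (hG : G.Proper) : ∀ {Γ : List Ty} {t : Trm} {A : Ty} (k : ℕ),
    Deriv Γ t A → Deriv (Γ.map (·.tsubst k G)) t (A.tsubst k G)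
  | _, _, _, k, .ax h₁ h₂ =>
    .ax (by rw [List.getElem?_map, h₁]; rfl) (by
      simp only [List.mem_map, forall_exists_index, and_imp, forall_apply_eq_imp_iff₂]
      exact fun B hB => (h₂ B hB).tsubst hG k)
  | _, _, _, k, .arrI hA d => .arrI (hA.tsubst hG k) (d.tsubst G hG k)
  | _, _, _, k, .arrE d e => .arrE (d.tsubst G hG k) (e.tsubst G hG k)
  | Γ, _, _, k, .allI h d =>
    .allI ((Ty.mem_tfv_tsubst_of_lt _ G k.succ_pos).2 h)
      ((d.tsubst G hG (k + 1)).cast (Ty.map_tsubst_succ_map_tlift_zero Γ k G) rfl rfl)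
  | _, _, _, k, .allE (A := A) G' hG' hA d =>
    (Deriv.allE (G'.tsubst k G) (hG'.tsubst hG k)
      ((Ty.mem_tfv_tsubst_of_lt _ G k.succ_pos).2 hA) (d.tsubst G hG k)).cast rfl rfl
      (by simpa using Ty.tsubst_tsubst A 0 k G G')

variable {Γ : List Ty} {t : Trm} {A : Ty}

theorem hp_tlift_and_ep_tlift (m : ℕ) (d : Deriv Γ t A) :
    (HP d → HP (d.tlift m)) ∧ (EP d → EP (d.tlift m)) := by
  induction d generalizing m with
  | ax =>
    refine ⟨fun _ => .ax _ _, fun h => EP.of_hp (.ax _ _) ?_⟩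
    obtain ⟨-, X, rfl⟩ := h.inv
    exact Ty.exists_tlift_var_eq_var m X
  | arrI _ _ ih => exact ⟨fun h => h.inv.elim, fun h => .arrI _ _ ((ih m).2 h.inv)⟩
  | arrE d e ihd ihe =>
    have hp (h : HP (d.arrE e)) : HP ((d.arrE e).tlift m) :=
      .arrE _ _ ((ihd m).1 h.inv.1) ((ihe m).2 h.inv.2)
    refine ⟨hp, fun h => EP.of_hp (hp h.inv.1) ?_⟩
    obtain ⟨-, X, hX⟩ := h.inv
    exact hX ▸ Ty.exists_tlift_var_eq_var m X
  | allI _ _ ih =>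
    exact ⟨fun h => h.inv.elim, fun h => .allI _ _ ((ep_cast _ _ _ _).2 ((ih (m + 1)).2 h.inv))⟩
  | allE G hG hA d ih =>
    have hp (h : HP (d.allE G hG hA)) : HP ((d.allE G hG hA).tlift m) :=
      (hp_cast _ _ _ _).2 (.allE _ _ _ _ ((ih m).1 h.inv))
    refine ⟨hp, fun h => EP.of_hp (hp h.inv.1) ?_⟩
    obtain ⟨-, X, hX⟩ := h.inv
    exact hX ▸ Ty.exists_tlift_var_eq_var m X

theorem hp_weaken_and_ep_weaken (C : Ty) (hC : C.Proper) (Γ₁ Γ₂ : List Ty) (hΓ : Γ = Γ₁ ++ Γ₂)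
    (d : Deriv Γ t A) :
    (HP d → HP (d.weaken C hC Γ₁ Γ₂ hΓ)) ∧ (EP d → EP (d.weaken C hC Γ₁ Γ₂ hΓ)) := by
  induction d generalizing Γ₁ Γ₂ C with
  | ax =>
    refine ⟨fun _ => (hp_cast _ _ _ _).2 (.ax _ _), fun h => ?_⟩
    exact (ep_cast _ _ _ _).2 (EP.of_hp (.ax _ _) h.inv.2)
  | arrI _ _ ih => exact ⟨fun h => h.inv.elim, fun h => .arrI _ _ ((ih ..).2 h.inv)⟩
  | arrE d e ihd ihe =>
    have hp (h : HP (d.arrE e)) : HP ((d.arrE e).weaken C hC Γ₁ Γ₂ hΓ) :=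
      .arrE _ _ ((ihd ..).1 h.inv.1) ((ihe ..).2 h.inv.2)
    exact ⟨hp, fun h => EP.of_hp (hp h.inv.1) h.inv.2⟩
  | allI _ _ ih =>
    exact ⟨fun h => h.inv.elim, fun h => .allI _ _ ((ep_cast _ _ _ _).2 ((ih ..).2 h.inv))⟩
  | allE G hG hA d ih =>
    have hp (h : HP (d.allE G hG hA)) : HP ((d.allE G hG hA).weaken C hC Γ₁ Γ₂ hΓ) :=
      .allE _ _ _ _ ((ih ..).1 h.inv)
    exact ⟨hp, fun h => EP.of_hp (hp h.inv.1) h.inv.2⟩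

theorem isAllI_tsubst_iff (G : Ty) (hG : G.Proper) (k : ℕ) (d : Deriv Γ t A) :
    (d.tsubst G hG k).IsAllI ↔ d.IsAllI := by
  cases d <;> simp only [tsubst, isAllI_cast] <;> rfl

theorem AllCutFree.tsubst (G : Ty) (hG : G.Proper) {d : Deriv Γ t A} (hd : d.AllCutFree) (k : ℕ) :
    (d.tsubst G hG k).AllCutFree := by
  induction d generalizing k with
  | ax => trivial
  | arrI _ _ ih => exact ih hd k
  | arrE _ _ ihd ihe => exact ⟨ihd hd.1 k, ihe hd.2 k⟩
  | allI _ _ ih => exact (allCutFree_cast _ _ _ _).2 (ih hd (k + 1))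
  | allE _ _ _ d ih =>
    exact (allCutFree_cast _ _ _ _).2 ⟨ih hd.1 k, (isAllI_tsubst_iff G hG k d).not.2 hd.2⟩

end Deriv

theorem exists_etaLong_of_hp {Γ : List Ty} {t : Trm} {A : Ty} (d : Deriv Γ t A) (hd : HP d) :
    ∃ t', EtaLong Γ t' A ∧ EtaStar t' t := by
  induction A generalizing Γ t with
  | var X => exact ⟨t, ⟨d, .head d hd⟩, .refl⟩
  | arr A₁ A₂ ih₁ ih₂ =>
    have hA₁ : A₁.Proper := d.ty_proper.1
    have hΓ : ∀ B ∈ A₁ :: Γ, B.Proper := by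
      simpa only [List.mem_cons, forall_eq_or_imp] using ⟨hA₁, d.ctx_proper⟩
    obtain ⟨e, ⟨de, hde⟩, he⟩ := ih₁ (Deriv.ax (Γ := A₁ :: Γ) (n := 0) rfl hΓ) (.ax _ _)
    have hd' := (d.hp_weaken_and_ep_weaken A₁ hA₁ [] Γ rfl).1 hd
    obtain ⟨b, ⟨db, hdb⟩, hb⟩ := ih₂ (.arrE _ de) (.arrE _ _ hd' hde)
    refine ⟨.lam b, ⟨.arrI hA₁ db, .arrI _ _ hdb⟩, ?_⟩
    exact hb.lam.trans (he.app_right.lam.tail (Eta.eta t))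
  | all A₁ ih =>
    have hA₁ : 0 ∈ Ty.tfv (Ty.tlift 1 A₁) :=
      (Ty.mem_tfv_tlift A₁ 1 0).2 (.inl ⟨Nat.one_pos, d.ty_proper.2⟩)
    -- instantiating `∀X A₁`, lifted past `X`, at `X` itself
    let d₁ : Deriv (Γ.map (Ty.tlift 0)) t A₁ :=
      (Deriv.allE (.var 0) trivial hA₁ (d.tlift 0)).cast rfl rfl
        (Ty.tsubst_tlift_succ_var_zero A₁ 0)
    have hd₁ : HP d₁ := (Deriv.hp_cast _ _ _ _).2 (.allE _ _ _ _ ((d.hp_tlift_and_ep_tlift 0).1 hd))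
    obtain ⟨t', ⟨d', hd'⟩, h'⟩ := ih d₁ hd₁
    exact ⟨t', ⟨.allI d.ty_proper.2 d', .allI _ _ hd'⟩, h'⟩

theorem exists_etaLong_of_exists_hp {Γ : List Ty} {t : Trm} {A : Ty}
    (h : ∃ t₀, (∃ d₀ : Deriv Γ t₀ A, HP d₀) ∧ EtaStar t₀ t) :
    ∃ t', EtaLong Γ t' A ∧ EtaStar t' t := by
  obtain ⟨t₀, ⟨d₀, hd₀⟩, h₀⟩ := h
  obtain ⟨t', ht', h'⟩ := exists_etaLong_of_hp d₀ hd₀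
  exact ⟨t', ht', h'.trans h₀⟩

namespace Deriv

variable {Γ : List Ty} {t : Trm} {A : Ty}

theorem AllCutFree.exists_allE (G : Ty) (hG : G.Proper) {A : Ty} (hA : 0 ∈ Ty.tfv A) {C : Ty}
    {d : Deriv Γ t C} (hd : d.AllCutFree) (hC : C = .all A) :
    ∃ d' : Deriv Γ t (A.tsubst 0 G), d'.AllCutFree := by
  by_cases hI : d.IsAllI
  · cases d with
    | allI _ e =>
      cases hC
      exact ⟨(e.tsubst G hG 0).cast (Ty.map_tsubst_map_tlift Γ G) rfl rfl,
        (allCutFree_cast _ _ _ _).2 (AllCutFree.tsubst G hG (d := e) hd 0)⟩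
    | _ => exact hI.elim
  · subst hC
    exact ⟨.allE G hG hA d, hd, hI⟩

theorem exists_allCutFree (d : Deriv Γ t A) : ∃ d' : Deriv Γ t A, d'.AllCutFree := by
  induction d with
  | ax h₁ h₂ => exact ⟨.ax h₁ h₂, trivial⟩
  | arrI hA _ ih => obtain ⟨d', hd'⟩ := ih; exact ⟨.arrI hA d', hd'⟩
  | arrE _ _ ihd ihe =>
    obtain ⟨d', hd'⟩ := ihd
    obtain ⟨e', he'⟩ := ihe
    exact ⟨.arrE d' e', hd', he'⟩
  | allI h _ ih => obtain ⟨d', hd'⟩ := ih; exact ⟨.allI h d', hd'⟩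
  | allE G hG hA _ ih => obtain ⟨d', hd'⟩ := ih; exact hd'.exists_allE G hG hA rfl

theorem AllCutFree.exists_eq_arr_of_lam {d : Deriv Γ t A} (hd : d.AllCutFree) (hI : ¬ d.IsAllI)
    {u : Trm} (ht : t = .lam u) : ∃ B C, A = .arr B C := by
  induction d with
  | arrI => exact ⟨_, _, rfl⟩
  | allI => exact (hI trivial).elim
  | allE _ _ _ _ ih => obtain ⟨_, _, h⟩ := ih hd.1 hd.2 ht; cases h
  | ax | arrE => cases ht

/-- Proved together, since the η-long form of a head term needs those of its arguments. -/
theorem exists_hp_and_exists_etaLong (d : Deriv Γ t A) :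
    (isHeadVar t → BetaNormal t → d.AllCutFree → ¬ d.IsAllI →
      ∃ t', (∃ d' : Deriv Γ t' A, HP d') ∧ EtaStar t' t) ∧
    (BetaNormal t → d.AllCutFree → ∃ t', EtaLong Γ t' A ∧ EtaStar t' t) := by
  induction d with
  | ax h₁ h₂ =>
    exact ⟨fun _ _ _ _ => ⟨_, ⟨.ax h₁ h₂, .ax _ _⟩, .refl⟩,
      fun _ _ => exists_etaLong_of_hp _ (.ax h₁ h₂)⟩
  | arrI hA _ ih =>
    refine ⟨fun h => h.elim, fun hn hd => ?_⟩
    obtain ⟨u', ⟨d', hd'⟩, hu⟩ := ih.2 hn.of_lam hd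
    exact ⟨.lam u', ⟨.arrI hA d', .arrI _ _ hd'⟩, hu.lam⟩
  | arrE _ _ ihd ihe =>
    refine (and_iff_left_of_imp fun hS hn hd => exists_etaLong_of_exists_hp
      (hS (hn.isHeadVar fun _ h => by cases h) hn hd id)).2 fun ht hn hd _ => ?_
    obtain ⟨u', ⟨du, hdu⟩, hu⟩ := ihd.1 ht hn.of_app_left hd.1 fun hI => by
      obtain ⟨_, h⟩ := hI.exists_eq_all; cases h
    obtain ⟨v', ⟨dv, hdv⟩, hv⟩ := ihe.2 hn.of_app_right hd.2
    exact ⟨.app u' v', ⟨.arrE du dv, .arrE _ _ hdu hdv⟩, hu.app_left.trans hv.app_right⟩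
  | allI h _ ih =>
    refine ⟨fun _ _ _ hI => (hI trivial).elim, fun hn hd => ?_⟩
    obtain ⟨t', ⟨d', hd'⟩, h'⟩ := ih.2 hn hd
    exact ⟨t', ⟨.allI h d', .allI _ _ hd'⟩, h'⟩
  | allE G hG hA _ ih =>
    refine (and_iff_left_of_imp fun hS hn hd => exists_etaLong_of_exists_hp
      (hS (hn.isHeadVar fun _ hu => ?_) hn hd id)).2 fun ht hn hd _ => ?_
    · obtain ⟨t', ⟨d', hd'⟩, h'⟩ := ih.1 ht hn hd.1 hd.2
      exact ⟨t', ⟨.allE G hG hA d', .allE _ _ _ _ hd'⟩, h'⟩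
    · obtain ⟨_, _, h⟩ := hd.1.exists_eq_arr_of_lam hd.2 hu
      cases h

end Deriv

/-- every β-normal typable term η-expands to an η-long term of the
same type in the same context. -/
theorem stmt10 (Γ : List Ty) (t : Trm) (A : Ty) (hn : BetaNormal t)
    (h : Nonempty (Deriv Γ t A)) :
    ∃ t' : Trm, EtaLong Γ t' A ∧ EtaStar t' t := by
  obtain ⟨d⟩ := h
  obtain ⟨d', hd'⟩ := d.exists_allCutFree
  exact (d'.exists_hp_and_exists_etaLong).2 hn hd'
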